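/- arXiv:2509.11415 — 4 statements merged into one kernel-verified Lean document; each statement's English description precedes it below -/
import Mathlib

section
/- Let F : ℝⁿ ⇉ ℝⁿ be locally bounded with closed graph, let g : ℝⁿ → ℝ be C¹ with locally Lipschitz gradient near x̄, and suppose sup_{u ∈ F(x̄)} ⟨∇g(x̄), u⟩ < 0. Then there exist ᾱ, ρ, ω > 0 such that for all α ∈ (0, ᾱ], all x ∈ B_ρ(x̄), and all u ∈ F(x), one has g(x + αu) − g(x) ≤ −ωα. -/
/-!
Near `xb` the values `F x` stay in a fixed compact set, and the graph of `F` is closed, so the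
tube lemma turns the strict inequality `⟪∇g xb, u⟫ ≤ m < m / 2` on `F xb` into
`⟪∇g x, u⟫ < m / 2` for all `u ∈ F x` with `x` near `xb`. A Lipschitz gradient bounds the error
of the first-order expansion by `L ‖α • u‖²`, so `g (x + α • u) - g x ≤ α (m / 2 + L α M²)`,
which is at most `α m / 4` once `α` is small.
-/

open Set Metric Filter Topology InnerProductSpace

theorem eventually_forall_mem_lt_of_isClosed_graph {X Y : Type*} [TopologicalSpace X]
    [PseudoMetricSpace Y] [ProperSpace Y] {F : X → Set Y} {x₀ : X} {φ : X → Y → ℝ} {c : ℝ}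
    (hbound : ∃ U ∈ 𝓝 x₀, Bornology.IsBounded (⋃ x ∈ U, F x))
    (hgraph : IsClosed {p : X × Y | p.2 ∈ F p.1})
    (hφ : ∀ y, ContinuousAt (fun p : X × Y ↦ φ p.1 p.2) (x₀, y))
    (hlt : ∀ y ∈ F x₀, φ x₀ y < c) :
    ∀ᶠ x in 𝓝 x₀, ∀ y ∈ F x, φ x y < c := by
  obtain ⟨U, hU, hUb⟩ := hbound
  have hK : IsCompact (closure (⋃ x ∈ U, F x)) := hUb.isCompact_closure
  have hP : ∀ y ∈ closure (⋃ x ∈ U, F x),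
      ∀ᶠ p : X × Y in 𝓝 (x₀, y), p.2 ∈ F p.1 → φ p.1 p.2 < c := by
    intro y _
    by_cases hy : y ∈ F x₀
    · exact ((hφ y).eventually (gt_mem_nhds (hlt y hy))).mono fun _ h _ ↦ h
    · filter_upwards [hgraph.isOpen_compl.mem_nhds (show (x₀, y) ∈ _ from hy)] with p hp hp'
      exact absurd hp' hp
  filter_upwards [hU, hK.eventually_forall_of_forall_eventually
    (P := fun x y ↦ y ∈ F x → φ x y < c) hP] with x hxU hx y hy
  exact hx y (subset_closure (mem_iUnion₂.mpr ⟨x, hxU, hy⟩)) hy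

theorem abs_sub_sub_inner_gradient_le_of_lipschitzOnWith {E : Type*} [NormedAddCommGroup E]
    [InnerProductSpace ℝ E] [CompleteSpace E] {f : E → ℝ} {s : Set E} {L : NNReal} {x y : E}
    (hs : Convex ℝ s) (hf : ∀ z ∈ s, DifferentiableAt ℝ f z)
    (hL : LipschitzOnWith L (gradient f) s) (hx : x ∈ s) (hy : y ∈ s) :
    |f y - f x - inner ℝ (gradient f x) (y - x)| ≤ L * ‖y - x‖ ^ 2 := by
  have hseg := hs.segment_subset hx hy
  have bound : ∀ z ∈ segment ℝ x y, ‖fderiv ℝ f z - fderiv ℝ f x‖ ≤ L * ‖y - x‖ := by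
    intro z hz
    rw [← toDual_gradient, ← toDual_gradient, ← map_sub, LinearIsometryEquiv.norm_map,
      ← dist_eq_norm]
    exact (hL.dist_le_mul z (hseg hz) x hx).trans
      (mul_le_mul_of_nonneg_left (dist_eq_norm z x ▸ norm_sub_le_of_mem_segment hz) L.coe_nonneg)
  have := (convex_segment x y).norm_image_sub_le_of_norm_fderiv_le' (fun z hz ↦ hf z (hseg hz))
    bound (left_mem_segment ℝ x y) (right_mem_segment ℝ x y)
  rw [← toDual_gradient, toDual_apply_apply, Real.norm_eq_abs] at this
  linarith

theorem apply_add_smul_sub_le_of_lipschitzOnWith_gradient {E : Type*} [NormedAddCommGroup E]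
    [InnerProductSpace ℝ E] [CompleteSpace E] {f : E → ℝ} {s : Set E} {L : NNReal} {x u : E}
    {α M c : ℝ} (hs : Convex ℝ s) (hf : ∀ z ∈ s, DifferentiableAt ℝ f z)
    (hL : LipschitzOnWith L (gradient f) s) (hx : x ∈ s) (hxu : x + α • u ∈ s) (hα : 0 ≤ α)
    (hu : ‖u‖ ≤ M) (hc : inner ℝ (gradient f x) u ≤ c) :
    f (x + α • u) - f x ≤ α * (c + L * α * M ^ 2) := by
  have hquad := abs_sub_sub_inner_gradient_le_of_lipschitzOnWith hs hf hL hx hxu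
  rw [add_sub_cancel_left, real_inner_smul_right] at hquad
  have hαu : ‖α • u‖ ≤ α * M := by
    rw [norm_smul, Real.norm_of_nonneg hα]
    exact mul_le_mul_of_nonneg_left hu hα
  calc f (x + α • u) - f x ≤ α * inner ℝ (gradient f x) u + L * ‖α • u‖ ^ 2 := by
        linarith [le_abs_self (f (x + α • u) - f x - α * inner ℝ (gradient f x) u)]
    _ ≤ α * c + L * (α * M) ^ 2 := by gcongr
    _ = α * (c + L * α * M ^ 2) := by ring

theorem stmt_2_general {n : ℕ}
    (F : EuclideanSpace ℝ (Fin n) → Set (EuclideanSpace ℝ (Fin n)))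
    (g : EuclideanSpace ℝ (Fin n) → ℝ) (xb : EuclideanSpace ℝ (Fin n))
    (hbound : ∀ y, ∃ U ∈ nhds y, Bornology.IsBounded (⋃ z ∈ U, F z))
    (hgraph : IsClosed {p : EuclideanSpace ℝ (Fin n) × EuclideanSpace ℝ (Fin n) | p.2 ∈ F p.1})
    (hC11 : ∃ ε > (0:ℝ), (∀ y ∈ ball xb ε, DifferentiableAt ℝ g y) ∧
      ContinuousOn (gradient g) (ball xb ε) ∧
      ∃ L : NNReal, LipschitzOnWith L (gradient g) (ball xb ε))
    (hsup : ∃ m < (0:ℝ), ∀ u ∈ F xb, inner ℝ (gradient g xb) u ≤ m) :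
    ∃ ᾱ > (0:ℝ), ∃ ρ > (0:ℝ), ∃ ω > (0:ℝ),
      ∀ α ∈ Set.Ioc (0:ℝ) ᾱ, ∀ x ∈ closedBall xb ρ, ∀ u ∈ F x,
        g (x + α • u) - g x ≤ -ω * α := by
  obtain ⟨ε, hε, hdiff, hcont, L, hLip⟩ := hC11
  obtain ⟨m, hm, hsup⟩ := hsup
  obtain ⟨U, hU, hUb⟩ := hbound xb
  obtain ⟨M, hM, hFM⟩ := hUb.exists_pos_norm_le
  have hdesc : ∀ᶠ x in 𝓝 xb, ∀ u ∈ F x, inner ℝ (gradient g x) u < m / 2 :=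
    eventually_forall_mem_lt_of_isClosed_graph (φ := fun x u ↦ inner ℝ (gradient g x) u)
      (hbound xb) hgraph
      (fun _ ↦ ((hcont.continuousAt (ball_mem_nhds xb hε)).comp_of_eq continuousAt_fst rfl).inner
        (𝕜 := ℝ) continuousAt_snd)
      (fun u hu ↦ (hsup u hu).trans_lt (by linarith))
  obtain ⟨ρ, hρ, hnear⟩ := Metric.eventually_nhds_iff_ball.mp
    (hdesc.and (inter_mem hU (ball_mem_nhds xb (half_pos hε))))
  refine ⟨min (ε / 2 / M) (-m / 4 / ((L + 1) * M ^ 2)),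
    lt_min (by positivity) (div_pos (by linarith) (by positivity)), ρ / 2, half_pos hρ,
    -m / 4, by linarith, ?_⟩
  rintro α ⟨hα, hαle⟩ x hx u hu
  obtain ⟨hlt, hxU, hxε⟩ := hnear x (closedBall_subset_ball (half_lt_self hρ) hx)
  have huM : ‖u‖ ≤ M := hFM u (mem_iUnion₂.mpr ⟨x, hxU, hu⟩)
  have hαM : α * M ≤ ε / 2 := (le_div_iff₀ hM).mp (hαle.trans (min_le_left _ _))
  have hαL : L * α * M ^ 2 ≤ -m / 4 := by
    have := (le_div_iff₀ (by positivity)).mp (hαle.trans (min_le_right _ _))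
    nlinarith [L.coe_nonneg]
  have hy : x + α • u ∈ ball xb ε := by
    rw [mem_ball] at hxε ⊢
    calc dist (x + α • u) xb ≤ ‖α • u‖ + dist x xb :=
          (dist_triangle _ x _).trans_eq (by rw [dist_self_add_left])
      _ ≤ α * M + dist x xb := by
          rw [norm_smul, Real.norm_of_nonneg hα.le]; gcongr
      _ < ε := by linarith
  have hstep := apply_add_smul_sub_le_of_lipschitzOnWith_gradient (convex_ball xb ε) hdiff hLip
    (ball_subset_ball (half_le_self hε.le) hxε) hy hα.le huM (hlt u hu).le
  nlinarith

/-- First-order sufficient condition for a 1-d-Lyapunov decrease: if `F` is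
locally bounded with closed graph, `g` is `C¹` with locally Lipschitz gradient
near `xb`, and `sup_{u ∈ F xb} ⟪∇g(xb), u⟫ < 0`, then there are `ᾱ, ρ, ω > 0`
with `g (x + α • u) - g x ≤ -ω * α` for all `α ∈ (0, ᾱ]`, `x ∈ B_ρ(xb)`,
`u ∈ F x`. -/
theorem stmt_2 {n : ℕ}
    (F : EuclideanSpace ℝ (Fin n) → Set (EuclideanSpace ℝ (Fin n)))
    (g : EuclideanSpace ℝ (Fin n) → ℝ) (xb : EuclideanSpace ℝ (Fin n))
    (hbound : ∀ y, ∃ U ∈ nhds y, Bornology.IsBounded (⋃ z ∈ U, F z))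
    (hgraph : IsClosed {p : EuclideanSpace ℝ (Fin n) × EuclideanSpace ℝ (Fin n) | p.2 ∈ F p.1})
    (hC11 : ∃ ε > (0:ℝ), (∀ y ∈ ball xb ε, DifferentiableAt ℝ g y) ∧
      ContinuousOn (gradient g) (ball xb ε) ∧
      ∃ L : NNReal, LipschitzOnWith L (gradient g) (ball xb ε))
    (hne : (F xb).Nonempty)
    (hsup : ∃ m < (0:ℝ), ∀ u ∈ F xb, inner ℝ (gradient g xb) u ≤ m) :
    ∃ ᾱ > (0:ℝ), ∃ ρ > (0:ℝ), ∃ ω > (0:ℝ),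
      ∀ α ∈ Set.Ioc (0:ℝ) ᾱ, ∀ x ∈ closedBall xb ρ, ∀ u ∈ F x,
        g (x + α • u) - g x ≤ -ω * α :=
  stmt_2_general F g xb hbound hgraph hC11 hsup
end

section
/- Let F : ℝⁿ ⇉ ℝⁿ be locally bounded with closed graph and g : ℝⁿ → ℝ be C² with locally Lipschitz Hessian near x̄. If there exists r > 0 such that ⟨∇g(x), u⟩ ≤ 0 for all x ∈ B_r(x̄) and u ∈ F(x), and sup_{u ∈ F(x̄)} ⟨∇²g(x̄)u, u⟩ < 0, then there exist ᾱ, ρ, ω > 0 such that g(x + αu) − g(x) ≤ −ωα² for all α ∈ (0, ᾱ], x ∈ B_ρ(x̄), u ∈ F(x). -/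
/-!
Closed graph and local boundedness make `F` outer semicontinuous at `xb`, so the strict bound
`⟪∇²g(xb) u, u⟫ < m / 2` persists for `u ∈ F x` with `x` near `xb`; continuity of the Hessian
(a consequence of its Lipschitz bound) then gives `⟪∇²g(y) u, u⟫ ≤ m / 4` for all `y` near `xb`
and all `u` of norm at most a local bound `M` of `F`. Along `t ↦ g (x + t • u)` the first
derivative starts nonpositive and the second is at most `m / 4`, hence
`g (x + α • u) - g x ≤ (m / 8) α²` as long as the segment stays near `xb`, which `α ≤ δ / (2M)`
and `x ∈ B_{δ/2}(xb)` guarantee.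
-/

open Set Metric Filter Topology
open scoped RealInnerProductSpace

section SetValued

variable {X Y : Type*} [TopologicalSpace X] [PseudoMetricSpace Y] [ProperSpace Y]

theorem eventually_subset_of_isClosed_graph {F : X → Set Y}
    (hgraph : IsClosed {p : X × Y | p.2 ∈ F p.1}) {x₀ : X}
    (hbound : ∃ U ∈ 𝓝 x₀, Bornology.IsBounded (⋃ z ∈ U, F z))
    {V : Set Y} (hV : IsOpen V) (hFV : F x₀ ⊆ V) :
    ∀ᶠ x in 𝓝 x₀, F x ⊆ V := by
  obtain ⟨U, hU, hB⟩ := hbound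
  have hK : IsCompact (closure (⋃ z ∈ U, F z) \ V) := hB.isCompact_closure.diff hV
  have hout : ∀ᶠ x in 𝓝 x₀, ∀ y ∈ closure (⋃ z ∈ U, F z) \ V, y ∉ F x :=
    hK.eventually_forall_of_forall_eventually fun y hy =>
      hgraph.isOpen_compl.mem_nhds fun hxy => hy.2 (hFV hxy)
  filter_upwards [hout, hU] with x hx hxU u hu
  by_contra huV
  exact hx u ⟨subset_closure (mem_biUnion hxU hu), huV⟩ hu

end SetValued

theorem sub_le_half_mul_sq_of_hasDerivAt {φ φ' φ'' : ℝ → ℝ} {a c : ℝ} (ha : 0 ≤ a)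
    (hφ : ∀ t ∈ Icc 0 a, HasDerivAt φ (φ' t) t)
    (hφ' : ∀ t ∈ Icc 0 a, HasDerivAt φ' (φ'' t) t)
    (hφ'' : ∀ t ∈ Icc 0 a, φ'' t ≤ c) (h0 : φ' 0 ≤ 0) :
    φ a - φ 0 ≤ c / 2 * a ^ 2 := by
  have hφ'_le : ∀ t ∈ Icc 0 a, φ' t ≤ c * t :=
    image_le_of_deriv_right_le_deriv_boundary
      (fun t ht => (hφ' t ht).continuousAt.continuousWithinAt)
      (fun t ht => (hφ' t (Ico_subset_Icc_self ht)).hasDerivWithinAt)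
      (by simpa using h0) (by fun_prop)
      (fun t _ => ((hasDerivAt_id t).const_mul c).hasDerivWithinAt)
      (fun t ht => by simpa using hφ'' t (Ico_subset_Icc_self ht))
  have hφ_le : ∀ t ∈ Icc 0 a, φ t ≤ φ 0 + c / 2 * t ^ 2 :=
    image_le_of_deriv_right_le_deriv_boundary (B' := fun t => c * t)
      (fun t ht => (hφ t ht).continuousAt.continuousWithinAt)
      (fun t ht => (hφ t (Ico_subset_Icc_self ht)).hasDerivWithinAt)
      (by simp) (by fun_prop)
      (fun t _ => ((((hasDerivAt_pow 2 t).const_mul (c / 2)).const_add (φ 0)).congr_deriv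
        (by norm_num; ring)).hasDerivWithinAt)
      (fun t ht => hφ'_le t (Ico_subset_Icc_self ht))
  linarith [hφ_le a (right_mem_Icc.2 ha)]

section InnerProductSpace

variable {E : Type*} [NormedAddCommGroup E] [InnerProductSpace ℝ E]

theorem ContinuousLinearMap.inner_apply_self_le_add (A B : E →L[ℝ] E) (u : E) :
    ⟪A u, u⟫ ≤ ⟪B u, u⟫ + ‖A - B‖ * ‖u‖ ^ 2 := by
  have : ⟪(A - B) u, u⟫ ≤ ‖A - B‖ * ‖u‖ ^ 2 :=
    calc ⟪(A - B) u, u⟫ ≤ ‖(A - B) u‖ * ‖u‖ := real_inner_le_norm _ _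
      _ ≤ ‖A - B‖ * ‖u‖ * ‖u‖ := by gcongr; exact (A - B).le_opNorm u
      _ = ‖A - B‖ * ‖u‖ ^ 2 := by ring
  rw [_root_.sub_apply, inner_sub_left] at this
  linarith

theorem ContinuousAt.eventually_inner_apply_self_le {X : Type*} [TopologicalSpace X]
    {A : X → E →L[ℝ] E} {x₀ : X} (hA : ContinuousAt A x₀) (M : ℝ) {d : ℝ} (hd : 0 < d) :
    ∀ᶠ x in 𝓝 x₀, ∀ u : E, ‖u‖ ≤ M → ⟪A x u, u⟫ ≤ ⟪A x₀ u, u⟫ + d := by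
  have hM : 0 < M ^ 2 + 1 := by positivity
  filter_upwards [hA.eventually (closedBall_mem_nhds (A x₀) (div_pos hd hM))] with x hx u hu
  have hAx : ‖A x - A x₀‖ ≤ d / (M ^ 2 + 1) := by rwa [dist_eq_norm] at hx
  have hu2 : ‖u‖ ^ 2 ≤ M ^ 2 + 1 := by nlinarith [norm_nonneg u]
  calc ⟪A x u, u⟫ ≤ ⟪A x₀ u, u⟫ + ‖A x - A x₀‖ * ‖u‖ ^ 2 :=
        (A x).inner_apply_self_le_add (A x₀) u
    _ ≤ ⟪A x₀ u, u⟫ + d / (M ^ 2 + 1) * (M ^ 2 + 1) := by gcongr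
    _ = ⟪A x₀ u, u⟫ + d := by field_simp

variable [CompleteSpace E]

theorem ContDiffAt.differentiableAt_gradient {g : E → ℝ} {y : E} (hg : ContDiffAt ℝ 2 g y) :
    DifferentiableAt ℝ (gradient g) y :=
  ((InnerProductSpace.toDual ℝ E).symm.differentiableAt).comp y
    ((hg.fderiv_right (m := 1) (by norm_num)).differentiableAt (by norm_num))

theorem sub_le_half_mul_sq_of_inner_fderiv_gradient_le {g : E → ℝ} {x u : E} {a c : ℝ}
    (ha : 0 ≤ a)
    (hg : ∀ t ∈ Icc 0 a, ContDiffAt ℝ 2 g (x + t • u))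
    (h0 : ⟪gradient g x, u⟫ ≤ 0)
    (hc : ∀ t ∈ Icc 0 a, ⟪fderiv ℝ (gradient g) (x + t • u) u, u⟫ ≤ c) :
    g (x + a • u) - g x ≤ c / 2 * a ^ 2 := by
  have hline (t : ℝ) : HasDerivAt (fun s : ℝ => x + s • u) u t := by
    simpa using ((hasDerivAt_id t).smul_const u).const_add x
  have key := sub_le_half_mul_sq_of_hasDerivAt (φ := fun t => g (x + t • u))
    (φ' := fun t => ⟪gradient g (x + t • u), u⟫)
    (φ'' := fun t => ⟪fderiv ℝ (gradient g) (x + t • u) u, u⟫) ha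
    (fun t ht => by
      rw [inner_gradient_left]
      exact ((hg t ht).differentiableAt (by norm_num)).hasFDerivAt.comp_hasDerivAt t (hline t))
    (fun t ht => by
      simpa using (((hg t ht).differentiableAt_gradient.hasFDerivAt.comp_hasDerivAt t
        (hline t)).inner ℝ (hasDerivAt_const t u)))
    hc (by simpa using h0)
  simpa using key

end InnerProductSpace

theorem add_smul_mem_closedBall {E : Type*} [SeminormedAddCommGroup E] [NormedSpace ℝ E]
    {x y u : E} {ρ t M : ℝ} (hx : x ∈ closedBall y ρ) (ht : 0 ≤ t) (hu : ‖u‖ ≤ M) :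
    x + t • u ∈ closedBall y (ρ + t * M) := by
  rw [mem_closedBall] at hx ⊢
  calc dist (x + t • u) y ≤ dist (x + t • u) x + dist x y := dist_triangle _ _ _
    _ = t * ‖u‖ + dist x y := by rw [dist_self_add_left, norm_smul, Real.norm_of_nonneg ht]
    _ ≤ ρ + t * M := by nlinarith

theorem stmt_3_general {n : ℕ}
    (F : EuclideanSpace ℝ (Fin n) → Set (EuclideanSpace ℝ (Fin n)))
    (g : EuclideanSpace ℝ (Fin n) → ℝ) (xb : EuclideanSpace ℝ (Fin n))
    (hbound : ∀ y, ∃ U ∈ nhds y, Bornology.IsBounded (⋃ z ∈ U, F z))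
    (hgraph : IsClosed {p : EuclideanSpace ℝ (Fin n) × EuclideanSpace ℝ (Fin n) | p.2 ∈ F p.1})
    (hC22 : ∃ ε > (0:ℝ), ContDiffOn ℝ 2 g (ball xb ε) ∧
      ∃ L : NNReal,
        LipschitzOnWith L (fun y => fderiv ℝ (gradient g) y) (ball xb ε))
    (hfirst : ∃ r > (0:ℝ), ∀ x ∈ closedBall xb r, ∀ u ∈ F x,
      inner ℝ (gradient g x) u ≤ (0:ℝ))
    (hsecond : ∃ m < (0:ℝ), ∀ u ∈ F xb,
      inner ℝ (fderiv ℝ (gradient g) xb u) u ≤ m) :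
    ∃ ᾱ > (0:ℝ), ∃ ρ > (0:ℝ), ∃ ω > (0:ℝ),
      ∀ α ∈ Set.Ioc (0:ℝ) ᾱ, ∀ x ∈ closedBall xb ρ, ∀ u ∈ F x,
        g (x + α • u) - g x ≤ -ω * α ^ 2 := by
  obtain ⟨ε, hε, hg, L, hLip⟩ := hC22
  obtain ⟨r, hr, hfirst⟩ := hfirst
  obtain ⟨m, hm, hsecond⟩ := hsecond
  obtain ⟨U, hU, hUF⟩ := hbound xb
  obtain ⟨M, hM, hUM⟩ := hUF.exists_pos_norm_le
  have hFM : ∀ᶠ x in 𝓝 xb, ∀ u ∈ F x, ‖u‖ ≤ M := by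
    filter_upwards [hU] with x hx u hu using hUM u (mem_biUnion hx hu)
  have hFH : ∀ᶠ x in 𝓝 xb, F x ⊆ {u | ⟪fderiv ℝ (gradient g) xb u, u⟫ < m / 2} :=
    eventually_subset_of_isClosed_graph hgraph ⟨U, hU, hUF⟩
      (isOpen_lt (by fun_prop) continuous_const)
      fun u hu => (hsecond u hu).trans_lt (by linarith)
  have hHess : ∀ᶠ y in 𝓝 xb, ∀ u, ‖u‖ ≤ M →
      ⟪fderiv ℝ (gradient g) y u, u⟫ ≤ ⟪fderiv ℝ (gradient g) xb u, u⟫ + -m / 4 :=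
    (hLip.continuousOn.continuousAt (ball_mem_nhds xb hε)).eventually_inner_apply_self_le M
      (by linarith)
  have hC2 : ∀ᶠ y in 𝓝 xb, ContDiffAt ℝ 2 g y := by
    filter_upwards [isOpen_ball.mem_nhds (mem_ball_self hε)] with y hy
    exact hg.contDiffAt (isOpen_ball.mem_nhds hy)
  obtain ⟨δ, hδ, hnear⟩ := nhds_basis_closedBall.eventually_iff.1
    (hFM.and (hFH.and (hHess.and (hC2.and (closedBall_mem_nhds xb hr)))))
  refine ⟨δ / (2 * M), by positivity, δ / 2, by positivity, -m / 8, by linarith, ?_⟩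
  intro α ⟨hα, hαδ⟩ x hx u hu
  obtain ⟨hxM, hxH, -, -, hxr⟩ := hnear (closedBall_subset_closedBall (by linarith) hx)
  have hseg : ∀ t ∈ Icc 0 α, x + t • u ∈ closedBall xb δ := fun t ht =>
    closedBall_subset_closedBall (by rw [le_div_iff₀ (by positivity)] at hαδ; nlinarith [ht.2])
      (add_smul_mem_closedBall hx ht.1 (hxM u hu))
  have hHu : ⟪fderiv ℝ (gradient g) xb u, u⟫ < m / 2 := hxH hu
  have hsegHess : ∀ t ∈ Icc 0 α, ContDiffAt ℝ 2 g (x + t • u) ∧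
      ⟪fderiv ℝ (gradient g) (x + t • u) u, u⟫ ≤ m / 4 := by
    intro t ht
    obtain ⟨-, -, hyH, hyg, -⟩ := hnear (hseg t ht)
    exact ⟨hyg, by linarith [hyH u (hxM u hu)]⟩
  calc g (x + α • u) - g x ≤ m / 4 / 2 * α ^ 2 :=
        sub_le_half_mul_sq_of_inner_fderiv_gradient_le hα.le (fun t ht => (hsegHess t ht).1)
          (hfirst x hxr u hu) fun t ht => (hsegHess t ht).2
    _ = -(-m / 8) * α ^ 2 := by ring

/-- Second-order sufficient condition for a 2-d-Lyapunov decrease: if `F` is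
locally bounded with closed graph, `g` is `C²` with locally Lipschitz Hessian
near `xb`, `⟪∇g(x), u⟫ ≤ 0` for all `x ∈ B_r(xb)` and `u ∈ F x`, and
`sup_{u ∈ F xb} ⟪∇²g(xb) u, u⟫ < 0`, then there are `ᾱ, ρ, ω > 0` with
`g (x + α • u) - g x ≤ -ω * α ^ 2` for all `α ∈ (0, ᾱ]`, `x ∈ B_ρ(xb)`,
`u ∈ F x`. -/
theorem stmt_3 {n : ℕ}
    (F : EuclideanSpace ℝ (Fin n) → Set (EuclideanSpace ℝ (Fin n)))
    (g : EuclideanSpace ℝ (Fin n) → ℝ) (xb : EuclideanSpace ℝ (Fin n))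
    (hbound : ∀ y, ∃ U ∈ nhds y, Bornology.IsBounded (⋃ z ∈ U, F z))
    (hgraph : IsClosed {p : EuclideanSpace ℝ (Fin n) × EuclideanSpace ℝ (Fin n) | p.2 ∈ F p.1})
    (hC22 : ∃ ε > (0:ℝ), ContDiffOn ℝ 2 g (ball xb ε) ∧
      ∃ L : NNReal,
        LipschitzOnWith L (fun y => fderiv ℝ (gradient g) y) (ball xb ε))
    (hne : (F xb).Nonempty)
    (hfirst : ∃ r > (0:ℝ), ∀ x ∈ closedBall xb r, ∀ u ∈ F x,
      inner ℝ (gradient g x) u ≤ (0:ℝ))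
    (hsecond : ∃ m < (0:ℝ), ∀ u ∈ F xb,
      inner ℝ (fderiv ℝ (gradient g) xb u) u ≤ m) :
    ∃ ᾱ > (0:ℝ), ∃ ρ > (0:ℝ), ∃ ω > (0:ℝ),
      ∀ α ∈ Set.Ioc (0:ℝ) ᾱ, ∀ x ∈ closedBall xb ρ, ∀ u ∈ F x,
        g (x + α • u) - g x ≤ -ω * α ^ 2 :=
  stmt_3_general F g xb hbound hgraph hC22 hfirst hsecond
end

section
/- Let a > b > 0 and f(x, y) = (ax² + by² − 1)², g(x, y) = |x|^b/|y|^a (for y ≠ 0). Then for y ≠ 0 and x ≠ 0, with v = s·(ax, by)/√(a²x² + b²y²) for s ∈ {−1, 1} (a normalized gradient direction of f), one has ⟨∇g(x, y), v⟩ = 0 and ⟨∇²g(x, y)v, v⟩ = −ab(a − b)g(x, y)/(a²x² + b²y²) < 0. -/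
/-- For `a > b > 0`, `f(x,y) = (ax² + by² - 1)²`, `g(x,y) = |x|^b/|y|^a`, and a
normalized gradient direction `v = s (ax, by)/√(a²x² + b²y²)` of `f` with
`s = ±1`, one has (for `x ≠ 0`, `y ≠ 0`) `⟨∇g, v⟩ = 0` and
`⟨∇²g v, v⟩ = -ab(a-b) g(x,y)/(a²x² + b²y²) < 0`. -/
theorem stmt_14 (a b x y s : ℝ) (hb : 0 < b) (hab : b < a)
    (hx : x ≠ 0) (hy : y ≠ 0) (hs : s = 1 ∨ s = -1) :
    let N := Real.sqrt (a ^ 2 * x ^ 2 + b ^ 2 * y ^ 2)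
    let v1 := s * (a * x) / N
    let v2 := s * (b * y) / N
    let g := |x| ^ b / |y| ^ a
    let g1 := b * x * |x| ^ (b - 2) / |y| ^ a
    let g2 := -a * y * |x| ^ b / |y| ^ (a + 2)
    let h11 := b * (b - 1) * |x| ^ (b - 2) / |y| ^ a
    let h12 := -a * b * x * y * |x| ^ (b - 2) / |y| ^ (a + 2)
    let h22 := a * (a + 1) * |x| ^ b / |y| ^ (a + 2)
    g1 * v1 + g2 * v2 = 0 ∧
    (h11 * v1 + h12 * v2) * v1 + (h12 * v1 + h22 * v2) * v2
      = -(a * b * (a - b) * g) / (a ^ 2 * x ^ 2 + b ^ 2 * y ^ 2) ∧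
    -(a * b * (a - b) * g) / (a ^ 2 * x ^ 2 + b ^ 2 * y ^ 2) < 0 := by
  intro N v1 v2 g g1 g2 h11 h12 h22
  have ha : 0 < a := hb.trans hab
  have hx' : (0:ℝ) < |x| := abs_pos.mpr hx
  have hy' : (0:ℝ) < |y| := abs_pos.mpr hy
  have hxb : (0:ℝ) < |x| ^ b := Real.rpow_pos_of_pos hx' b
  have hya : (0:ℝ) < |y| ^ a := Real.rpow_pos_of_pos hy' a
  have hsum : (0:ℝ) < a ^ 2 * x ^ 2 + b ^ 2 * y ^ 2 := by positivity
  have hN2 : N ^ 2 = a ^ 2 * x ^ 2 + b ^ 2 * y ^ 2 := Real.sq_sqrt hsum.le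
  have hN : N ≠ 0 := by
    intro h
    rw [h] at hN2; simp at hN2; nlinarith
  have e1 : |x| ^ b = |x| ^ (b - 2) * x ^ 2 := by
    rw [← sq_abs, ← Real.rpow_two, ← Real.rpow_add hx']
    ring_nf
  have e2 : |y| ^ (a + 2) = |y| ^ a * y ^ 2 := by
    rw [← sq_abs, ← Real.rpow_two, ← Real.rpow_add hy']
  refine ⟨?_, ?_, ?_⟩
  · show b * x * |x| ^ (b - 2) / |y| ^ a * (s * (a * x) / N)
      + -a * y * |x| ^ b / |y| ^ (a + 2) * (s * (b * y) / N) = 0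
    rw [e1, e2]
    field_simp
    ring
  · show (b * (b - 1) * |x| ^ (b - 2) / |y| ^ a * (s * (a * x) / N)
      + -a * b * x * y * |x| ^ (b - 2) / |y| ^ (a + 2) * (s * (b * y) / N)) * (s * (a * x) / N)
      + (-a * b * x * y * |x| ^ (b - 2) / |y| ^ (a + 2) * (s * (a * x) / N)
      + a * (a + 1) * |x| ^ b / |y| ^ (a + 2) * (s * (b * y) / N)) * (s * (b * y) / N)
      = -(a * b * (a - b) * (|x| ^ b / |y| ^ a)) / (a ^ 2 * x ^ 2 + b ^ 2 * y ^ 2)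
    rcases hs with rfl | rfl <;>
      (rw [e1, e2, ← hN2]; field_simp; ring)
  · show -(a * b * (a - b) * (|x| ^ b / |y| ^ a)) / (a ^ 2 * x ^ 2 + b ^ 2 * y ^ 2) < 0
    apply div_neg_of_neg_of_pos _ hsum
    have hg : 0 < |x| ^ b / |y| ^ a := div_pos hxb hya
    nlinarith [mul_pos (mul_pos (mul_pos ha hb) (sub_pos.mpr hab)) hg]
end

section
/- Let a < 0 < b. The function h(x, y) = (ax² + by² − 1)² + |x|^b·|y|^{−a} is coercive on {(x, y) ∈ ℝ² : y ≠ 0} in the following sense: h(x_k, y_k) → ∞ whenever |(x_k, y_k)| → ∞ with y_k ≠ 0. -/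
open Filter Topology

set_option maxHeartbeats 1000000 in
lemma aux_key (a b : ℝ) (ha : a < 0) (hb : 0 < b) (M : ℝ) (hM : 1 ≤ M) :
    ∃ R : ℝ, ∀ u v : ℝ, R ≤ u ^ 2 + v ^ 2 →
      M ≤ (a * u ^ 2 + b * v ^ 2 - 1) ^ 2 + |u| ^ b * |v| ^ (-a) := by
  have hna0 : 0 < -a := by linarith
  set na : ℝ := -a with hna
  set c : ℝ := min 1 (min (na / b) (b / na)) / 2 with hc
  have hmin0 : 0 < min 1 (min (na / b) (b / na)) := by positivity
  have hc0 : 0 < c := by positivity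
  have hc1 : c ≤ 1 / 2 := by
    have h1 : min 1 (min (na / b) (b / na)) ≤ 1 := min_le_left _ _
    rw [hc]; linarith
  have hcab : c ≤ na / (2 * b) := by
    have h1 : min 1 (min (na / b) (b / na)) ≤ na / b :=
      le_trans (min_le_right _ _) (min_le_left _ _)
    have h2 : na / (2 * b) = (na / b) / 2 := by ring
    rw [hc, h2]; linarith
  have hcba : c ≤ b / (2 * na) := by
    have h1 : min 1 (min (na / b) (b / na)) ≤ b / na :=
      le_trans (min_le_right _ _) (min_le_right _ _)
    have h2 : b / (2 * na) = (b / na) / 2 := by ring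
    rw [hc, h2]; linarith
  -- key consequences of the definition of c
  have hnac : na * c ≤ b / 2 := by
    have h1 := mul_le_mul_of_nonneg_left hcba hna0.le
    have h2 : na * (b / (2 * na)) = b / 2 := by
      field_simp
    linarith
  have hbc : b * c ≤ na / 2 := by
    have h1 := mul_le_mul_of_nonneg_left hcab hb.le
    have h2 : b * (na / (2 * b)) = na / 2 := by
      field_simp
    linarith
  set D : ℝ := 2 * M / min b na with hD
  have hminbna : 0 < min b na := lt_min hb hna0
  have hD0 : 0 < D := by positivity
  have hDmin : min b na * D = 2 * M := by
    rw [hD]; field_simp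
  have hbD : 2 * M ≤ b * D := by
    have h1 : min b na ≤ b := min_le_left _ _
    nlinarith
  have hnaD : 2 * M ≤ na * D := by
    have h1 : min b na ≤ na := min_le_right _ _
    nlinarith
  set L : ℝ := max 1 (M ^ ((2 : ℝ) / (b - a))) with hL
  have hL1 : 1 ≤ L := le_max_left _ _
  have hL0 : 0 < L := by linarith
  refine ⟨(D + L) / c, fun u v hr => ?_⟩
  set s : ℝ := u ^ 2 with hs
  set t : ℝ := v ^ 2 with ht
  have hs0 : 0 ≤ s := sq_nonneg u
  have ht0 : 0 ≤ t := sq_nonneg v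
  have hcr : D + L ≤ c * (s + t) := by
    rw [div_le_iff₀ hc0] at hr; linarith [mul_comm c (s + t)]
  have hr0 : 0 < s + t := by nlinarith
  have hsecond_nonneg : 0 ≤ |u| ^ b * |v| ^ (-a) := by positivity
  rcases le_or_gt M ((a * s + b * t - 1) ^ 2) with h1 | h1
  · linarith
  · -- first term small: derive bounds
    have h2 : -M < a * s + b * t - 1 := by
      nlinarith [sq_nonneg (a * s + b * t - 1 + M)]
    have h3 : a * s + b * t - 1 < M := by
      nlinarith [sq_nonneg (a * s + b * t - 1 - M)]
    -- show L ≤ s and L ≤ t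
    have hst : L ≤ s ∧ L ≤ t := by
      rcases le_or_gt s ((s + t) / 2) with hcase | hcase
      · -- t ≥ (s+t)/2
        have htbig : (s + t) / 2 ≤ t := by linarith
        have hsl : L ≤ s := by
          -- na * s > b * t - 1 - M ≥ b*(s+t)/2 - 2M ≥ na*c*(s+t) - 2M ≥ na*(D+L) - 2M
          have k1 : b * t - 1 - M < na * s := by rw [hna]; linarith
          have k2 : na * c * (s + t) ≤ (b / 2) * (s + t) :=
            mul_le_mul_of_nonneg_right hnac hr0.le
          have k3 : na * (D + L) ≤ na * (c * (s + t)) :=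
            mul_le_mul_of_nonneg_left hcr hna0.le
          have k5 : na * L ≤ na * s := by nlinarith
          exact le_of_mul_le_mul_left k5 hna0
        refine ⟨hsl, ?_⟩
        have k6 : c * (s + t) ≤ (s + t) / 2 := by nlinarith
        linarith
      · -- s ≥ (s+t)/2
        have hsbig : (s + t) / 2 ≤ s := by linarith
        have hsl : L ≤ s := by
          have k6 : c * (s + t) ≤ (s + t) / 2 := by nlinarith
          linarith
        refine ⟨hsl, ?_⟩
        have k1 : na * s - 2 * M < b * t := by rw [hna]; nlinarith
        have k2 : b * c * (s + t) ≤ (na / 2) * (s + t) :=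
          mul_le_mul_of_nonneg_right hbc hr0.le
        have k3 : b * (D + L) ≤ b * (c * (s + t)) :=
          mul_le_mul_of_nonneg_left hcr hb.le
        have k5 : b * L ≤ b * t := by nlinarith
        exact le_of_mul_le_mul_left k5 hb
    obtain ⟨hsl, htl⟩ := hst
    -- now second term ≥ M
    have e1 : |u| ^ b = s ^ (b / 2) := by
      rw [hs, ← sq_abs u, ← Real.rpow_natCast |u| 2,
        ← Real.rpow_mul (abs_nonneg u)]
      norm_num
      congr 1
      ring
    have e2 : |v| ^ (-a) = t ^ (na / 2) := by
      rw [ht, ← sq_abs v, ← Real.rpow_natCast |v| 2,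
        ← Real.rpow_mul (abs_nonneg v), hna]
      norm_num
      congr 1
      ring
    have mono1 : L ^ (b / 2) ≤ s ^ (b / 2) :=
      Real.rpow_le_rpow hL0.le hsl (by positivity)
    have mono2 : L ^ (na / 2) ≤ t ^ (na / 2) :=
      Real.rpow_le_rpow hL0.le htl (by positivity)
    have prod : L ^ (b / 2) * L ^ (na / 2) ≤ s ^ (b / 2) * t ^ (na / 2) :=
      mul_le_mul mono1 mono2 (Real.rpow_nonneg hL0.le _) (Real.rpow_nonneg hs0 _)
    have lpow : L ^ (b / 2) * L ^ (na / 2) = L ^ ((b - a) / 2) := by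
      rw [← Real.rpow_add hL0, hna]; ring_nf
    have hML : M ≤ L ^ ((b - a) / 2) := by
      have hexp : (0 : ℝ) < (b - a) / 2 := by linarith
      have h4 : M ^ ((2 : ℝ) / (b - a)) ≤ L := le_max_right _ _
      have h5 : (M ^ ((2 : ℝ) / (b - a))) ^ ((b - a) / 2) ≤ L ^ ((b - a) / 2) :=
        Real.rpow_le_rpow (Real.rpow_nonneg (by linarith) _) h4 hexp.le
      rw [← Real.rpow_mul (by linarith : (0:ℝ) ≤ M)] at h5
      have heq : (2 : ℝ) / (b - a) * ((b - a) / 2) = 1 := by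
        have : b - a ≠ 0 := by linarith
        field_simp
      rw [heq, Real.rpow_one] at h5
      exact h5
    have hfin : M ≤ s ^ (b / 2) * t ^ (na / 2) := by
      calc M ≤ L ^ ((b - a) / 2) := hML
        _ = L ^ (b / 2) * L ^ (na / 2) := lpow.symm
        _ ≤ _ := prod
    rw [e1, e2]
    nlinarith [sq_nonneg (a * s + b * t - 1)]

/-- For `a < 0 < b`, the function `h(x,y) = (ax² + by² - 1)² + |x|^b |y|^{-a}`
is coercive on `{y ≠ 0}`: it tends to `∞` along any sequence with `y_k ≠ 0`
whose norm tends to `∞`. -/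
theorem stmt_15 (a b : ℝ) (ha : a < 0) (hb : 0 < b)
    (x y : ℕ → ℝ) (hy : ∀ k, y k ≠ 0)
    (hnorm : Tendsto (fun k => Real.sqrt ((x k) ^ 2 + (y k) ^ 2)) atTop atTop) :
    Tendsto
      (fun k => (a * (x k) ^ 2 + b * (y k) ^ 2 - 1) ^ 2 + |x k| ^ b * |y k| ^ (-a))
      atTop atTop := by
  rw [tendsto_atTop]
  intro M0
  obtain ⟨R, hR⟩ := aux_key a b ha hb (max M0 1) (le_max_right _ _)
  have hev : ∀ᶠ k in atTop, Real.sqrt (max R 0) ≤ Real.sqrt ((x k) ^ 2 + (y k) ^ 2) :=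
    hnorm.eventually (eventually_ge_atTop _)
  filter_upwards [hev] with k hk
  have hrk : R ≤ (x k) ^ 2 + (y k) ^ 2 := by
    have h2 : (Real.sqrt (max R 0)) ^ 2 ≤ (Real.sqrt ((x k) ^ 2 + (y k) ^ 2)) ^ 2 :=
      pow_le_pow_left₀ (Real.sqrt_nonneg _) hk 2
    rw [Real.sq_sqrt (le_max_right _ _), Real.sq_sqrt (by positivity)] at h2
    exact le_trans (le_max_left _ _) h2
  exact le_trans (le_max_left M0 1) (hR _ _ hrk)
end
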